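/- In the above setting, as a corollary: for x ∈ V_(n−1)∖{a}, |v_{n,t}(x) − v_{n,t+1}(x)| ≤ (1/𝓡_{n,t}) Σ_{e∈E_(n)} |R_t(e) − R_{t+1}(e)|. -/

import Mathlib

noncomputable section

variable {V : Type*} [Fintype V]

/-- A unit flow from `src` to the sink set `snk` on a finite graph. -/
def IsUnitFlowF (G : SimpleGraph V) (src : V) (snk : Set V) (j : V → V → ℝ) : Prop :=
  (∀ x y, j x y = -j y x) ∧
  (∀ x y, ¬G.Adj x y → j x y = 0) ∧
  (∀ x, x ≠ src → x ∉ snk → ∑ y, j x y = 0) ∧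
  (∑ y, j src y = 1)

/-- The energy `∑_e j(e)² R(e)` of a flow (edges counted once, whence the `1/2`). -/
def energyF (R : V → V → ℝ) (j : V → V → ℝ) : ℝ :=
  (1 / 2) * ∑ x, ∑ y, (j x y) ^ 2 * R x y

/-- The unit current: the unit flow minimizing the energy (Thompson's principle). -/
def IsUnitCurrent (G : SimpleGraph V) (src : V) (snk : Set V)
    (R : V → V → ℝ) (i : V → V → ℝ) : Prop :=
  IsUnitFlowF G src snk i ∧
  ∀ j, IsUnitFlowF G src snk j → energyF R i ≤ energyF R j

set_option linter.unusedSectionVars false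
namespace Stmt11Aux

section
open Finset

variable {W : Type*}

/-- first-order condition from one-sided quadratic nonnegativity -/
lemma quad_zero (X Y : ℝ) (hY : 0 ≤ Y) (h : ∀ ε : ℝ, 0 ≤ ε * X + ε ^ 2 * Y) : X = 0 := by
  have hY1 : 0 < Y + 1 := by linarith
  have key : (-X / (Y + 1)) * X + (-X / (Y + 1)) ^ 2 * Y = -X ^ 2 / (Y + 1) ^ 2 := by
    field_simp; ring
  have h1 : (0:ℝ) ≤ -X ^ 2 / (Y + 1) ^ 2 := key ▸ h (-X / (Y + 1))
  have h5 : (0:ℝ) ≤ (-X ^ 2 / (Y + 1) ^ 2) * (Y + 1) ^ 2 := mul_nonneg h1 (sq_nonneg _)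
  rw [div_mul_cancel₀ _ (by positivity : ((Y:ℝ) + 1) ^ 2 ≠ 0)] at h5
  nlinarith [sq_nonneg X]

variable [Fintype W]

/-- summation by parts -/
lemma sbp (f : W → W → ℝ) (hf : ∀ y z, f y z = - f z y) (g : W → ℝ) :
    ∑ y, ∑ z, f y z * (g y - g z) = 2 * ∑ y, g y * ∑ z, f y z := by
  have h1 : ∑ y, ∑ z, f y z * (g y - g z)
      = (∑ y, ∑ z, f y z * g y) - ∑ y, ∑ z, f y z * g z := by
    rw [← Finset.sum_sub_distrib]
    refine Finset.sum_congr rfl fun y _ => ?_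
    rw [← Finset.sum_sub_distrib]
    refine Finset.sum_congr rfl fun z _ => by ring
  have h2 : ∑ y, ∑ z, f y z * g y = ∑ y, g y * ∑ z, f y z := by
    refine Finset.sum_congr rfl fun y _ => ?_
    rw [Finset.mul_sum]
    exact Finset.sum_congr rfl fun z _ => by ring
  have h3 : ∑ y, ∑ z, f y z * g z = - ∑ y, g y * ∑ z, f y z := by
    rw [Finset.sum_comm]
    rw [← Finset.sum_neg_distrib]
    refine Finset.sum_congr rfl fun z _ => ?_
    rw [Finset.mul_sum, ← Finset.sum_neg_distrib]
    refine Finset.sum_congr rfl fun y _ => ?_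
    rw [hf y z]; ring
  rw [h1, h2, h3]; ring

/-- a potential flow with a single source has all edge-flows bounded by the strength -/
lemma flow_bound (F : W → W → ℝ) (u : W → ℝ) (w : W) (s : ℝ) (hs : 0 ≤ s)
    (hanti : ∀ y z, F y z = - F z y)
    (hpos : ∀ y z, u z < u y → 0 ≤ F y z)
    (hpos' : ∀ y z, 0 < F y z → u z < u y)
    (hdivw : ∑ z, F w z ≤ s)
    (hdiv : ∀ v, v ≠ w → ∑ z, F v z ≤ 0) :
    ∀ p q, F p q ≤ s := by
  intro p q
  by_cases hF : F p q ≤ 0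
  · linarith
  push_neg at hF
  have hupq : u q < u p := hpos' p q hF
  classical
  set S : Finset W := Finset.univ.filter (fun v => u q < u v) with hS
  have hpS : p ∈ S := by simp [hS, hupq]
  -- internal sum vanishes
  have hint : ∑ y ∈ S, ∑ z ∈ S, F y z = 0 := by
    have hswap : ∑ y ∈ S, ∑ z ∈ S, F y z = - ∑ y ∈ S, ∑ z ∈ S, F y z := by
      calc ∑ y ∈ S, ∑ z ∈ S, F y z
          = ∑ y ∈ S, ∑ z ∈ S, -(F z y) :=
            Finset.sum_congr rfl fun y _ => Finset.sum_congr rfl fun z _ => hanti y z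
        _ = - ∑ y ∈ S, ∑ z ∈ S, F z y := by
            rw [← Finset.sum_neg_distrib]
            exact Finset.sum_congr rfl fun y _ => by rw [Finset.sum_neg_distrib]
        _ = - ∑ y ∈ S, ∑ z ∈ S, F y z := by rw [Finset.sum_comm]
    linarith
  have hsplit : ∑ y ∈ S, ∑ z, F y z
      = (∑ y ∈ S, ∑ z ∈ S, F y z)
        + ∑ y ∈ S, ∑ z ∈ Finset.univ.filter (fun v => ¬ u q < u v), F y z := by
    rw [← Finset.sum_add_distrib]
    refine Finset.sum_congr rfl fun y _ => ?_
    rw [← Finset.sum_filter_add_sum_filter_not Finset.univ (fun v => u q < u v) (F y)]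
  have hcut : ∑ y ∈ S, ∑ z ∈ Finset.univ.filter (fun v => ¬ u q < u v), F y z
      = ∑ y ∈ S, ∑ z, F y z := by rw [hsplit, hint]; ring
  -- upper bound for the cut
  have hub : ∑ y ∈ S, ∑ z, F y z ≤ s := by
    calc ∑ y ∈ S, ∑ z, F y z ≤ ∑ y ∈ S, (if y = w then s else 0) := by
          refine Finset.sum_le_sum fun y _ => ?_
          by_cases hy : y = w
          · subst hy; simpa using hdivw
          · simpa [hy] using hdiv y hy
      _ ≤ s := by
          rw [Finset.sum_ite_eq' S w (fun _ => s)]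
          by_cases hw : w ∈ S <;> simp [hw, hs]
  -- lower bound : each cut term nonneg, (p,q) is a term
  have hnn : ∀ y ∈ S, ∀ z ∈ Finset.univ.filter (fun v => ¬ u q < u v), 0 ≤ F y z := by
    intro y hy z hz
    simp only [hS, Finset.mem_filter, Finset.mem_univ, true_and] at hy hz
    exact hpos y z (lt_of_le_of_lt (not_lt.mp hz) hy)
  have hlb : F p q ≤ ∑ y ∈ S, ∑ z ∈ Finset.univ.filter (fun v => ¬ u q < u v), F y z := by
    have hqmem : q ∈ Finset.univ.filter (fun v => ¬ u q < u v) := by simp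
    have h1 : F p q ≤ ∑ z ∈ Finset.univ.filter (fun v => ¬ u q < u v), F p z :=
      Finset.single_le_sum (fun z hz => hnn p hpS z hz) hqmem
    have h2 : ∑ z ∈ Finset.univ.filter (fun v => ¬ u q < u v), F p z
        ≤ ∑ y ∈ S, ∑ z ∈ Finset.univ.filter (fun v => ¬ u q < u v), F y z :=
      Finset.single_le_sum (fun y hy => Finset.sum_nonneg fun z hz => hnn y hy z hz) hpS
    linarith
  linarith [hcut ▸ hlb]
end

section
variable {W : Type*} [Fintype W]

lemma sum2_congr (f g : W → W → ℝ) (h : ∀ y z, f y z = g y z) :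
    ∑ y, ∑ z, f y z = ∑ y, ∑ z, g y z :=
  Finset.sum_congr rfl fun y _ => Finset.sum_congr rfl fun z _ => h y z

lemma sum2_add (f g : W → W → ℝ) :
    ∑ y, ∑ z, (f y z + g y z) = (∑ y, ∑ z, f y z) + ∑ y, ∑ z, g y z := by
  rw [← Finset.sum_add_distrib]
  exact Finset.sum_congr rfl fun y _ => Finset.sum_add_distrib

lemma sum2_sub (f g : W → W → ℝ) :
    ∑ y, ∑ z, (f y z - g y z) = (∑ y, ∑ z, f y z) - ∑ y, ∑ z, g y z := by
  rw [← Finset.sum_sub_distrib]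
  exact Finset.sum_congr rfl fun y _ => Finset.sum_sub_distrib _ _

lemma sum2_mul_right (f : W → W → ℝ) (c : ℝ) :
    ∑ y, ∑ z, f y z * c = (∑ y, ∑ z, f y z) * c := by
  rw [Finset.sum_mul]
  exact Finset.sum_congr rfl fun y _ => (Finset.sum_mul ..).symm

/-- expansion of the quadratic energy along a perturbation -/
lemma energy_expand (R A D : W → W → ℝ) (ε : ℝ) :
    (1/2) * ∑ y, ∑ z, (A y z + ε * D y z)^2 * R y z
    = (1/2) * (∑ y, ∑ z, (A y z)^2 * R y z)
      + ε * (∑ y, ∑ z, R y z * A y z * D y z)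
      + ε^2 * ((1/2) * ∑ y, ∑ z, (D y z)^2 * R y z) := by
  have h : ∑ y, ∑ z, (A y z + ε * D y z)^2 * R y z
      = ∑ y, ∑ z, ((A y z)^2 * R y z
          + ((R y z * A y z * D y z) * (2*ε) + ((D y z)^2 * R y z) * ε^2)) :=
    sum2_congr _ _ fun y z => by ring
  rw [h, sum2_add, sum2_add, sum2_mul_right, sum2_mul_right]
  ring
end

section
open SimpleGraph
variable {W : Type*} [Fintype W] [DecidableEq W]

/-- the harmonicity hypothesis implies zero divergence of the induced current -/
lemma div_harm (G : SimpleGraph W) [DecidableRel G.Adj] (C : W → W → ℝ) (u : W → ℝ) (v : W)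
    (hC : ∀ z, G.Adj v z → 0 < C v z)
    (hh : u v = ∑ y ∈ G.neighborFinset v, (C v y / ∑ z ∈ G.neighborFinset v, C v z) * u y) :
    ∑ z, (if G.Adj v z then C v z * (u v - u z) else 0) = 0 := by
  have hrestrict : ∑ z, (if G.Adj v z then C v z * (u v - u z) else 0)
      = ∑ z ∈ G.neighborFinset v, C v z * (u v - u z) := by
    rw [← Finset.sum_subset (Finset.subset_univ (G.neighborFinset v))
      (fun z _ hz => if_neg (fun hadj => hz ((mem_neighborFinset G v z).mpr hadj)))]
    exact Finset.sum_congr rfl fun z hz => if_pos ((mem_neighborFinset G v z).mp hz)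
  rw [hrestrict]
  rcases Finset.eq_empty_or_nonempty (G.neighborFinset v) with hN | hN
  · rw [hN]; simp
  · set Cv := ∑ z ∈ G.neighborFinset v, C v z with hCv
    have hCvpos : 0 < Cv :=
      Finset.sum_pos (fun z hz => hC z ((mem_neighborFinset G v z).mp hz)) hN
    have hsum : ∑ y ∈ G.neighborFinset v, (C v y / Cv) * u y
        = (∑ y ∈ G.neighborFinset v, C v y * u y) / Cv := by
      rw [Finset.sum_div]
      exact Finset.sum_congr rfl fun y _ => by field_simp
    have hne : Cv ≠ 0 := ne_of_gt hCvpos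
    have hmain : Cv * u v = ∑ y ∈ G.neighborFinset v, C v y * u y := by
      rw [hh, hsum]; field_simp
    calc ∑ z ∈ G.neighborFinset v, C v z * (u v - u z)
        = Cv * u v - ∑ z ∈ G.neighborFinset v, C v z * u z := by
          rw [Finset.sum_congr rfl (fun z _ => by ring :
              ∀ z ∈ G.neighborFinset v, C v z * (u v - u z) = C v z * u v - C v z * u z),
            Finset.sum_sub_distrib, hCv, Finset.sum_mul]
      _ = 0 := by rw [hmain]; ring
end

section
open Finset SimpleGraph

variable {W : Type*}

/-- propagation along walks -/
lemma propagate (G : SimpleGraph W) {P : W → Prop} {T : Set W}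
    (h : ∀ v, P v → v ∉ T → ∀ z, G.Adj v z → P z) :
    ∀ {p t : W}, G.Walk p t → P p → t ∈ T → ∃ v ∈ T, P v := by
  intro p t w
  induction w with
  | nil => exact fun hp ht => ⟨_, ht, hp⟩
  | @cons p r t hadj w ih =>
    intro hp ht
    by_cases hpT : p ∈ T
    · exact ⟨p, hpT, hp⟩
    · exact ih (h p hp hpT r hadj) ht

variable (G : SimpleGraph W) [DecidableEq W]

/-- sum of an edge-function along a walk -/
def wSum (f : W → W → ℝ) : {p q : W} → G.Walk p q → ℝ
  | p, _, SimpleGraph.Walk.cons (v := r) _ w => f p r + wSum f w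
  | _, _, SimpleGraph.Walk.nil => 0

/-- the unit flow along a walk -/
def wFlow : {p q : W} → G.Walk p q → W → W → ℝ
  | p, _, SimpleGraph.Walk.cons (v := r) _ w => (fun y z =>
      (if y = p ∧ z = r then (1:ℝ) else 0) - if y = r ∧ z = p then 1 else 0) + wFlow w
  | _, _, SimpleGraph.Walk.nil => fun _ _ => 0

@[simp] lemma wSum_nil (f : W → W → ℝ) {p : W} : wSum G f (SimpleGraph.Walk.nil : G.Walk p p) = 0 := rfl
@[simp] lemma wSum_cons (f : W → W → ℝ) {p r q : W} (h : G.Adj p r) (w : G.Walk r q) :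
    wSum G f (SimpleGraph.Walk.cons h w) = f p r + wSum G f w := rfl
@[simp] lemma wFlow_nil {p : W} : wFlow G (SimpleGraph.Walk.nil : G.Walk p p) = fun _ _ => 0 := rfl
@[simp] lemma wFlow_cons {p r q : W} (h : G.Adj p r) (w : G.Walk r q) :
    wFlow G (SimpleGraph.Walk.cons h w) = (fun y z =>
      (if y = p ∧ z = r then (1:ℝ) else 0) - if y = r ∧ z = p then 1 else 0) + wFlow G w := rfl

lemma wSum_append (f : W → W → ℝ) {p q t : W} (w1 : G.Walk p q) (w2 : G.Walk q t) :
    wSum G f (w1.append w2) = wSum G f w1 + wSum G f w2 := by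
  induction w1 with
  | nil => simp
  | cons hadj w ih => simp [SimpleGraph.Walk.cons_append, ih]; ring

lemma wSum_reverse (f : W → W → ℝ) (hf : ∀ y z, f y z = - f z y) {p q : W} (w : G.Walk p q) :
    wSum G f w.reverse = - wSum G f w := by
  induction w with
  | nil => simp
  | @cons p r q hadj w ih =>
    rw [SimpleGraph.Walk.reverse_cons, wSum_append, ih]
    simp [hf r p]

lemma wFlow_anti {p q : W} (w : G.Walk p q) : ∀ y z, wFlow G w y z = - wFlow G w z y := by
  induction w with
  | nil => simp
  | @cons p r q hadj w ih =>
    intro y z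
    simp only [wFlow_cons, Pi.add_apply]
    rw [ih y z]
    have h1 : (y = p ∧ z = r) ↔ (z = r ∧ y = p) := and_comm
    have h2 : (y = r ∧ z = p) ↔ (z = p ∧ y = r) := and_comm
    rw [if_congr h1 rfl rfl, if_congr h2 rfl rfl]
    ring

lemma wFlow_support {p q : W} (w : G.Walk p q) : ∀ y z, ¬ G.Adj y z → wFlow G w y z = 0 := by
  induction w with
  | nil => simp
  | @cons p r q hadj w ih =>
    intro y z hyz
    simp only [wFlow_cons, Pi.add_apply, ih y z hyz, add_zero]
    have h1 : ¬ (y = p ∧ z = r) := by rintro ⟨rfl, rfl⟩; exact hyz hadj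
    have h2 : ¬ (y = r ∧ z = p) := by rintro ⟨rfl, rfl⟩; exact hyz hadj.symm
    simp [h1, h2]

variable [Fintype W]

lemma wFlow_div {p q : W} (w : G.Walk p q) (v : W) :
    ∑ z, wFlow G w v z = (if v = p then 1 else 0) - (if v = q then 1 else 0) := by
  induction w with
  | nil => simp
  | @cons p r q hadj w ih =>
    simp only [wFlow_cons, Pi.add_apply]
    rw [Finset.sum_add_distrib, ih]
    have h1 : ∑ z, ((if v = p ∧ z = r then (1:ℝ) else 0) - if v = r ∧ z = p then 1 else 0)
        = (if v = p then 1 else 0) - (if v = r then 1 else 0) := by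
      rw [Finset.sum_sub_distrib]
      congr 1 <;> simp [ite_and, Finset.sum_ite_eq']
    rw [h1]; ring

lemma wFlow_pair (f : W → W → ℝ) (hf : ∀ y z, f y z = - f z y) {p q : W} (w : G.Walk p q) :
    ∑ y, ∑ z, f y z * wFlow G w y z = 2 * wSum G f w := by
  induction w with
  | nil => simp
  | @cons p r q hadj w ih =>
    simp only [wFlow_cons, Pi.add_apply]
    have hsplit : ∑ y, ∑ z, f y z * ((((if y = p ∧ z = r then (1:ℝ) else 0) -
          if y = r ∧ z = p then 1 else 0)) + wFlow G w y z)
        = (∑ y, ∑ z, f y z * ((if y = p ∧ z = r then (1:ℝ) else 0) -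
            if y = r ∧ z = p then 1 else 0)) + ∑ y, ∑ z, f y z * wFlow G w y z := by
      rw [← Finset.sum_add_distrib]
      refine Finset.sum_congr rfl fun y _ => ?_
      rw [← Finset.sum_add_distrib]
      exact Finset.sum_congr rfl fun z _ => by ring
    rw [hsplit, ih]
    have hedge : ∑ y, ∑ z, f y z * ((if y = p ∧ z = r then (1:ℝ) else 0) -
        if y = r ∧ z = p then 1 else 0) = f p r - f r p := by
      have hterm : ∀ y z : W, f y z * ((if y = p ∧ z = r then (1:ℝ) else 0) -
          if y = r ∧ z = p then 1 else 0)
          = (if y = p ∧ z = r then f y z else 0) - (if y = r ∧ z = p then f y z else 0) := by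
        intro y z
        have hpr : p ≠ r := hadj.ne
        by_cases h1 : y = p ∧ z = r <;> by_cases h2 : y = r ∧ z = p <;>
          simp [h1, h2, hpr, hpr.symm]
      have hdelta : ∀ c d : W, ∑ y, ∑ z, (if y = c ∧ z = d then f y z else 0) = f c d := by
        intro c d
        simp [ite_and, Finset.sum_ite_eq', Finset.sum_ite_eq]
      calc ∑ y, ∑ z, f y z * ((if y = p ∧ z = r then (1:ℝ) else 0) -
            if y = r ∧ z = p then 1 else 0)
          = ∑ y, ∑ z, ((if y = p ∧ z = r then f y z else 0) -
              (if y = r ∧ z = p then f y z else 0)) := by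
            exact Finset.sum_congr rfl fun y _ => Finset.sum_congr rfl fun z _ => hterm y z
        _ = (∑ y, ∑ z, (if y = p ∧ z = r then f y z else 0)) -
              ∑ y, ∑ z, (if y = r ∧ z = p then f y z else 0) := by
            rw [← Finset.sum_sub_distrib]
            exact Finset.sum_congr rfl fun y _ => by rw [← Finset.sum_sub_distrib]
        _ = f p r - f r p := by rw [hdelta, hdelta]
    rw [hedge, wSum_cons, hf r p]; ring

/-- minimum principle : the minimum of a `C`-harmonic-off-`T` function is attained on `T` -/
lemma min_principle [DecidableRel G.Adj]
    (hconn : G.Connected) (C : W → W → ℝ) (hC : ∀ y z, G.Adj y z → 0 < C y z)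
    (u : W → ℝ) (T : Set W) (t0 : W) (ht0 : t0 ∈ T)
    (hint : ∀ v, v ∉ T → ∑ z, (if G.Adj v z then C v z * (u v - u z) else 0) = 0) :
    ∃ v ∈ T, ∀ y, u v ≤ u y := by
  obtain ⟨v0, -, hmin⟩ := Finset.exists_min_image Finset.univ u ⟨t0, Finset.mem_univ t0⟩
  have hmin' : ∀ y, u v0 ≤ u y := fun y => hmin y (Finset.mem_univ y)
  have hprop : ∀ v, u v = u v0 → v ∉ T → ∀ z, G.Adj v z → u z = u v0 := by
    intro v hv hvT z hz
    have h0 := hint v hvT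
    have hterm : ∀ w ∈ Finset.univ, (if G.Adj v w then C v w * (u v - u w) else 0) ≤ 0 := by
      intro w _
      by_cases hw : G.Adj v w
      · rw [if_pos hw]
        have := hmin' w
        have hCw := hC v w hw
        nlinarith [hv ▸ (hmin' w)]
      · rw [if_neg hw]
    have hz0 := (Finset.sum_eq_zero_iff_of_nonpos hterm).mp h0 z (Finset.mem_univ z)
    rw [if_pos hz] at hz0
    have hCz := hC v z hz
    have h4 : u v - u z = 0 := by
      rcases mul_eq_zero.mp hz0 with h | h
      · exact absurd h (ne_of_gt hCz)
      · exact h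
    linarith [h4, hv]
  obtain ⟨v, hvT, hPv⟩ := propagate G hprop ((hconn v0 t0).some) rfl ht0
  exact ⟨v, hvT, fun y => hPv ▸ hmin' y⟩
end

end Stmt11Aux
set_option linter.unusedSectionVars true

set_option maxHeartbeats 1000000 in
/-- in the setting of the current-form identity (finite network `G_(n)`
with origin `a`, boundary `B`, conductances `Ct`, `Ct1` and their voltages `vt`,
`vt1`), since unit currents satisfy `|i(y,z)| ≤ 1` on every edge,
`|v_{n,t}(x) - v_{n,t+1}(x)| ≤ (1/𝓡_{n,t}) ∑_{e∈E_(n)} |R_t(e) - R_{t+1}(e)|`,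
where `𝓡_{n,t}` is the effective resistance between `a` and `B` in `(G_(n), C_t)`
(the energy of the unit current `i₀`). -/
theorem stmt11 [DecidableEq V] (G : SimpleGraph V) [DecidableRel G.Adj]
    (hconn : G.Connected)
    (a : V) (B : Set V) (hB : B.Nonempty) (haB : a ∉ B)
    (Ct Ct1 : V → V → ℝ)
    (hsymt : ∀ x y, Ct x y = Ct y x) (hsymt1 : ∀ x y, Ct1 x y = Ct1 y x)
    (hpost : ∀ x y, G.Adj x y → 0 < Ct x y)
    (hpost1 : ∀ x y, G.Adj x y → 0 < Ct1 x y)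
    (vt vt1 : V → ℝ)
    (hvta : vt a = 1) (hvtB : ∀ x ∈ B, vt x = 0)
    (hvt1a : vt1 a = 1) (hvt1B : ∀ x ∈ B, vt1 x = 0)
    (hharmt : ∀ x, x ≠ a → x ∉ B →
      vt x = ∑ y ∈ G.neighborFinset x,
        (Ct x y / ∑ z ∈ G.neighborFinset x, Ct x z) * vt y)
    (hharmt1 : ∀ x, x ≠ a → x ∉ B →
      vt1 x = ∑ y ∈ G.neighborFinset x,
        (Ct1 x y / ∑ z ∈ G.neighborFinset x, Ct1 x z) * vt1 y)
    (x : V) (hxa : x ≠ a) (hxB : x ∉ B)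
    (i0 i1 : V → V → ℝ)
    (hi0 : IsUnitCurrent G a B (fun y z => 1 / Ct y z) i0)
    (hi1 : IsUnitCurrent G x ({a} ∪ B) (fun y z => 1 / Ct1 y z) i1) :
    |vt x - vt1 x| ≤
      (1 / energyF (fun y z => 1 / Ct y z) i0) *
        ((1 / 2) * ∑ y, ∑ z,
          (if G.Adj y z then |1 / Ct y z - 1 / Ct1 y z| else 0)) := by
  classical
  obtain ⟨b, hbB⟩ := hB
  obtain ⟨⟨hi0anti, hi0off, hi0int, hi0src⟩, hi0min⟩ := hi0
  obtain ⟨⟨hi1anti, hi1off, hi1int, hi1src⟩, hi1min⟩ := hi1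
  set I0 : V → V → ℝ := fun y z => if G.Adj y z then Ct y z * (vt y - vt z) else 0 with hI0def
  set I1 : V → V → ℝ := fun y z => if G.Adj y z then Ct1 y z * (vt1 y - vt1 z) else 0 with hI1def
  set s0 : ℝ := ∑ z, I0 a z with hs0def
  have hmem : ∀ v : V, v ∈ ({a} ∪ B : Set V) → (v = a ∨ v ∈ B) := by
    intro v hv
    rcases hv with h | h
    · exact Or.inl h
    · exact Or.inr h
  have hmema : ∀ v : V, v = a → v ∈ ({a} ∪ B : Set V) := fun v h =>
    Set.mem_union_left _ (Set.mem_singleton_iff.mpr h)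
  have hmemB : ∀ v : V, v ∈ B → v ∈ ({a} ∪ B : Set V) := fun v h => Set.mem_union_right _ h
  have hI0adj : ∀ y z, G.Adj y z → I0 y z = Ct y z * (vt y - vt z) := fun y z h => by
    simp only [hI0def, if_pos h]
  have hI0nadj : ∀ y z, ¬ G.Adj y z → I0 y z = 0 := fun y z h => by
    simp only [hI0def, if_neg h]
  have hI1adj : ∀ y z, G.Adj y z → I1 y z = Ct1 y z * (vt1 y - vt1 z) := fun y z h => by
    simp only [hI1def, if_pos h]
  have hI1nadj : ∀ y z, ¬ G.Adj y z → I1 y z = 0 := fun y z h => by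
    simp only [hI1def, if_neg h]
  have hI0anti : ∀ y z, I0 y z = - I0 z y := by
    intro y z
    by_cases h : G.Adj y z
    · rw [hI0adj y z h, hI0adj z y h.symm, hsymt y z]; ring
    · rw [hI0nadj y z h, hI0nadj z y (fun h' => h h'.symm)]; ring
  have hI1anti : ∀ y z, I1 y z = - I1 z y := by
    intro y z
    by_cases h : G.Adj y z
    · rw [hI1adj y z h, hI1adj z y h.symm, hsymt1 y z]; ring
    · rw [hI1nadj y z h, hI1nadj z y (fun h' => h h'.symm)]; ring
  have hdivI0 : ∀ v, v ≠ a → v ∉ B → ∑ z, I0 v z = 0 := by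
    intro v hva hvB
    have h := Stmt11Aux.div_harm G Ct vt v (fun z hz => hpost v z hz) (hharmt v hva hvB)
    rw [← h]
  have hdivI1 : ∀ v, v ≠ a → v ∉ B → ∑ z, I1 v z = 0 := by
    intro v hva hvB
    have h := Stmt11Aux.div_harm G Ct1 vt1 v (fun z hz => hpost1 v z hz) (hharmt1 v hva hvB)
    rw [← h]
  clear_value I0 I1 s0
  -- vt is nonnegative (minimum principle)
  have hvt0 : ∀ y, 0 ≤ vt y := by
    obtain ⟨v, hvT, hvmin⟩ := Stmt11Aux.min_principle G hconn Ct hpost vt ({a} ∪ B) b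
      (hmemB b hbB)
      (fun v hvT => Stmt11Aux.div_harm G Ct vt v (fun z hz => hpost v z hz)
        (hharmt v (fun h => hvT (hmema v h)) (fun h => hvT (hmemB v h))))
    rcases hmem v hvT with hva | hvB'
    · exfalso
      have h1 := hvmin b
      rw [hva, hvta, hvtB b hbB] at h1
      linarith
    · intro y
      have h1 := hvmin y
      rwa [hvtB v hvB'] at h1
  -- strength of the vt-current is positive
  have hsbpI0 : ∑ y, ∑ z, I0 y z * (vt y - vt z) = 2 * ∑ y, vt y * ∑ z, I0 y z :=
    Stmt11Aux.sbp I0 hI0anti vt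
  have hdivsum : ∑ y, vt y * ∑ z, I0 y z = s0 := by
    rw [Finset.sum_eq_single_of_mem a (Finset.mem_univ a) ?_]
    · rw [hvta, one_mul, hs0def]
    · intro y _ hya
      by_cases hyB : y ∈ B
      · rw [hvtB y hyB]; ring
      · rw [hdivI0 y hya hyB]; ring
  have hterm_nonneg : ∀ y z, 0 ≤ I0 y z * (vt y - vt z) := by
    intro y z
    by_cases h : G.Adj y z
    · rw [hI0adj y z h]
      have h1 := hpost y z h
      nlinarith [sq_nonneg (vt y - vt z)]
    · rw [hI0nadj y z h]; simp
  have hs0nonneg : 0 ≤ s0 := by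
    have h := hsbpI0
    rw [hdivsum] at h
    have h2 : 0 ≤ ∑ y, ∑ z, I0 y z * (vt y - vt z) :=
      Finset.sum_nonneg fun y _ => Finset.sum_nonneg fun z _ => hterm_nonneg y z
    linarith
  have hs0pos : 0 < s0 := by
    rcases lt_or_eq_of_le hs0nonneg with h | h
    · exact h
    exfalso
    have hzero : ∑ y, ∑ z, I0 y z * (vt y - vt z) = 0 := by
      rw [hsbpI0, hdivsum, ← h]; ring
    have hallzero : ∀ y z, I0 y z * (vt y - vt z) = 0 := by
      intro y z
      have h1 := (Finset.sum_eq_zero_iff_of_nonneg (fun y _ =>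
        Finset.sum_nonneg fun z _ => hterm_nonneg y z)).mp hzero y (Finset.mem_univ y)
      exact (Finset.sum_eq_zero_iff_of_nonneg (fun z _ => hterm_nonneg y z)).mp h1 z
        (Finset.mem_univ z)
    have hconst : ∀ v, vt v = 1 → v ∉ B → ∀ z, G.Adj v z → vt z = 1 := by
      intro v hv hvB z hz
      have h2 := hallzero v z
      rw [hI0adj v z hz] at h2
      have h3 := hpost v z hz
      have h4 : vt v - vt z = 0 := by
        rcases mul_eq_zero.mp h2 with h5 | h5
        · rcases mul_eq_zero.mp h5 with h6 | h6
          · exact absurd h6 (ne_of_gt h3)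
          · exact h6
        · exact h5
      linarith
    obtain ⟨v, hvB', hv1⟩ := Stmt11Aux.propagate G (T := B) hconst
      ((hconn.preconnected a b).some) hvta hbB
    rw [hvtB v hvB'] at hv1
    exact one_ne_zero hv1.symm
  have hs0ne : s0 ≠ 0 := ne_of_gt hs0pos
  -- edge currents of I0 are bounded by the strength
  have hI0le : ∀ p q, I0 p q ≤ s0 := by
    refine Stmt11Aux.flow_bound I0 vt a s0 (le_of_lt hs0pos) hI0anti ?_ ?_
      (le_of_eq hs0def.symm) ?_
    · intro y z hzy
      by_cases h : G.Adj y z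
      · rw [hI0adj y z h]; have h1 := hpost y z h; nlinarith
      · rw [hI0nadj y z h]
    · intro y z h0
      by_cases h : G.Adj y z
      · rw [hI0adj y z h] at h0; have h1 := hpost y z h; nlinarith
      · rw [hI0nadj y z h] at h0; linarith
    · intro v hva
      by_cases hvB : v ∈ B
      · refine Finset.sum_nonpos fun z _ => ?_
        by_cases h : G.Adj v z
        · rw [hI0adj v z h, hvtB v hvB]
          have h1 := hpost v z h
          have h2 := hvt0 z
          nlinarith
        · rw [hI0nadj v z h]
      · exact le_of_eq (hdivI0 v hva hvB)
  have hI0abs : ∀ p q, |I0 p q| ≤ s0 := fun p q =>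
    abs_le.mpr ⟨by have h := hI0le q p; rw [hI0anti p q]; linarith, hI0le p q⟩
  -- first-order condition for the energy-minimality of i1
  have FOC : ∀ d : V → V → ℝ, (∀ y z, d y z = - d z y) → (∀ y z, ¬ G.Adj y z → d y z = 0) →
      (∑ z, d x z = 0) → (∀ v, v ≠ x → v ∉ ({a} ∪ B : Set V) → ∑ z, d v z = 0) →
      ∑ y, ∑ z, (1 / Ct1 y z) * i1 y z * d y z = 0 := by
    intro d hdanti hdoff hdx hdint
    have hYnn : 0 ≤ (1/2) * ∑ y, ∑ z, (d y z)^2 * (1 / Ct1 y z) := by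
      have h2 : 0 ≤ ∑ y, ∑ z, (d y z)^2 * (1 / Ct1 y z) := by
        refine Finset.sum_nonneg fun y _ => Finset.sum_nonneg fun z _ => ?_
        by_cases h : G.Adj y z
        · have h1 := hpost1 y z h; positivity
        · rw [hdoff y z h]; simp
      linarith
    refine Stmt11Aux.quad_zero _ _ hYnn fun ε => ?_
    have hflow : IsUnitFlowF G x ({a} ∪ B) (fun y z => i1 y z + ε * d y z) := by
      refine ⟨fun y z => by
          show i1 y z + ε * d y z = -(i1 z y + ε * d z y)
          rw [hi1anti y z, hdanti y z]; ring,
        fun y z h => by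
          show i1 y z + ε * d y z = 0
          rw [hi1off y z h, hdoff y z h]; ring, ?_, ?_⟩
      · intro v hvx hvs
        show ∑ z, (i1 v z + ε * d v z) = 0
        rw [Finset.sum_add_distrib, hi1int v hvx hvs, ← Finset.mul_sum, hdint v hvx hvs]
        ring
      · show ∑ z, (i1 x z + ε * d x z) = 1
        rw [Finset.sum_add_distrib, hi1src, ← Finset.mul_sum, hdx]; ring
    have hle := hi1min _ hflow
    have hexp : (1/2) * ∑ y, ∑ z, (i1 y z + ε * d y z)^2 * (1 / Ct1 y z)
        = (1/2) * (∑ y, ∑ z, (i1 y z)^2 * (1 / Ct1 y z))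
          + ε * (∑ y, ∑ z, (1 / Ct1 y z) * i1 y z * d y z)
          + ε^2 * ((1/2) * ∑ y, ∑ z, (d y z)^2 * (1 / Ct1 y z)) :=
      Stmt11Aux.energy_expand (fun y z => 1 / Ct1 y z) i1 d ε
    have hle2 : (1/2) * (∑ y, ∑ z, (i1 y z)^2 * (1 / Ct1 y z))
        ≤ (1/2) * ∑ y, ∑ z, (i1 y z + ε * d y z)^2 * (1 / Ct1 y z) := hle
    rw [hexp] at hle2
    linarith
  -- construction of the potential u1 of the unit current i1
  set f1 : V → V → ℝ := fun y z => (1 / Ct1 y z) * i1 y z with hf1def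
  have hf1anti : ∀ y z, f1 y z = - f1 z y := fun y z => by
    simp only [hf1def]; rw [hi1anti y z, hsymt1 y z]; ring
  have hne2 : ∀ v : V, v ≠ a → v ∉ B → ∀ t : V, (t = a ∨ t ∈ B) → v ≠ t := by
    intro v h1 h2 t ht
    rcases ht with rfl | h
    · exact h1
    · exact fun he => h2 (he ▸ h)
  have hWalkZero : ∀ (p t : V), (p = a ∨ p ∈ B) → (t = a ∨ t ∈ B) → ∀ w : G.Walk p t,
      Stmt11Aux.wSum G f1 w = 0 := by
    intro p t hp ht w
    have hd := FOC (Stmt11Aux.wFlow G w) (Stmt11Aux.wFlow_anti G w)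
      (fun y z h => Stmt11Aux.wFlow_support G w y z h)
      (by
        rw [Stmt11Aux.wFlow_div G w x]
        have hxp : x ≠ p := hne2 x hxa hxB p hp
        have hxt : x ≠ t := hne2 x hxa hxB t ht
        simp [hxp, hxt])
      (by
        intro v hvx hvs
        rw [Stmt11Aux.wFlow_div G w v]
        have hva : v ≠ a := fun h => hvs (hmema v h)
        have hvB : v ∉ B := fun h => hvs (hmemB v h)
        have h1 : v ≠ p := hne2 v hva hvB p hp
        have h2 : v ≠ t := hne2 v hva hvB t ht
        simp [h1, h2])
    have hpair := Stmt11Aux.wFlow_pair G f1 hf1anti w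
    have h3 : ∑ y, ∑ z, f1 y z * Stmt11Aux.wFlow G w y z = 0 := by
      rw [← hd]
    rw [hpair] at h3
    linarith
  have hcwex : ∀ v : V, Nonempty (G.Walk a v) := fun v => hconn.preconnected a v
  let cw : ∀ v : V, G.Walk a v := fun v => (hcwex v).some
  let u1 : V → ℝ := fun v => - Stmt11Aux.wSum G f1 (cw v)
  have hu1v : ∀ v, u1 v = - Stmt11Aux.wSum G f1 (cw v) := fun v => rfl
  have hu1edge : ∀ y z, G.Adj y z → u1 y - u1 z = f1 y z := by
    intro y z h
    have hc := hWalkZero a a (Or.inl rfl) (Or.inl rfl)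
      ((cw y).append (SimpleGraph.Walk.cons h ((cw z).reverse)))
    rw [Stmt11Aux.wSum_append, Stmt11Aux.wSum_cons,
      Stmt11Aux.wSum_reverse G f1 hf1anti] at hc
    rw [hu1v y, hu1v z]
    linarith
  have hu1T : ∀ v, (v = a ∨ v ∈ B) → u1 v = 0 := by
    intro v hv
    rw [hu1v v, hWalkZero a v (Or.inl rfl) hv (cw v), neg_zero]
  have hrep : ∀ y z, i1 y z = if G.Adj y z then Ct1 y z * (u1 y - u1 z) else 0 := by
    intro y z
    by_cases h : G.Adj y z
    · rw [if_pos h, hu1edge y z h]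
      have hC := (hpost1 y z h).ne'
      simp only [hf1def]
      field_simp
    · rw [if_neg h]; exact hi1off y z h
  -- u1 is nonnegative (minimum principle)
  have hu1nn : ∀ y, 0 ≤ u1 y := by
    obtain ⟨v, hvT, hvmin⟩ := Stmt11Aux.min_principle G hconn Ct1 hpost1 u1
      (insert x ({a} ∪ B)) x (Set.mem_insert x _)
      (by
        intro v hvT
        have hvx : v ≠ x := fun h => hvT (by rw [h]; exact Set.mem_insert x _)
        have hvs : v ∉ ({a} ∪ B : Set V) := fun h => hvT (Set.mem_insert_of_mem _ h)
        rw [show (∑ z, if G.Adj v z then Ct1 v z * (u1 v - u1 z) else 0) = ∑ z, i1 v z from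
          Finset.sum_congr rfl fun z _ => (hrep v z).symm]
        exact hi1int v hvx hvs)
    rcases Set.mem_insert_iff.mp hvT with rfl | hvs
    · exfalso
      have hle : ∑ z, i1 v z ≤ 0 := by
        refine Finset.sum_nonpos fun z _ => ?_
        rw [hrep v z]
        by_cases h : G.Adj v z
        · rw [if_pos h]
          have h1 := hpost1 v z h
          have h2 := hvmin z
          nlinarith
        · rw [if_neg h]
      rw [hi1src] at hle
      linarith
    · intro y
      have h1 := hvmin y
      rwa [hu1T v (hmem v hvs)] at h1
  -- edge currents of i1 are bounded by 1
  have hi1le : ∀ p q, i1 p q ≤ 1 := by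
    refine Stmt11Aux.flow_bound i1 u1 x 1 zero_le_one hi1anti ?_ ?_ (le_of_eq hi1src) ?_
    · intro y z hzy
      rw [hrep y z]
      by_cases h : G.Adj y z
      · rw [if_pos h]; have h1 := hpost1 y z h; nlinarith
      · rw [if_neg h]
    · intro y z h0
      by_cases h : G.Adj y z
      · rw [hrep y z, if_pos h] at h0
        have h1 := hpost1 y z h
        nlinarith
      · rw [hi1off y z h] at h0; linarith
    · intro v hvx
      by_cases hvs : v ∈ ({a} ∪ B : Set V)
      · refine Finset.sum_nonpos fun z _ => ?_
        rw [hrep v z]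
        by_cases h : G.Adj v z
        · rw [if_pos h, hu1T v (hmem v hvs)]
          have h1 := hpost1 v z h
          have h2 := hu1nn z
          nlinarith
        · rw [if_neg h]
      · exact le_of_eq (hi1int v hvx hvs)
  have hi1abs : ∀ p q, |i1 p q| ≤ 1 := fun p q =>
    abs_le.mpr ⟨by have h := hi1le q p; rw [hi1anti p q]; linarith, hi1le p q⟩
  -- the current-form identity
  have hstep1 : ∑ y, (vt y - vt1 y) * ∑ z, i1 y z = vt x - vt1 x := by
    rw [Finset.sum_eq_single_of_mem x (Finset.mem_univ x) ?_]
    · rw [hi1src, mul_one]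
    · intro y _ hyx
      by_cases hya : y = a
      · subst hya; rw [hvta, hvt1a]; ring
      · by_cases hyB : y ∈ B
        · rw [hvtB y hyB, hvt1B y hyB]; ring
        · rw [hi1int y hyx (fun h => (hmem y h).elim hya hyB)]; ring
  have hstep2 : ∑ y, ∑ z, i1 y z * ((vt y - vt1 y) - (vt z - vt1 z))
      = 2 * ∑ y, (vt y - vt1 y) * ∑ z, i1 y z :=
    Stmt11Aux.sbp i1 hi1anti (fun y => vt y - vt1 y)
  have hstep3 : ∑ y, ∑ z, i1 y z * ((vt y - vt1 y) - (vt z - vt1 z))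
      = (∑ y, ∑ z, i1 y z * (vt y - vt z)) - ∑ y, ∑ z, i1 y z * (vt1 y - vt1 z) := by
    rw [← Stmt11Aux.sum2_sub]
    exact Stmt11Aux.sum2_congr _ _ fun y z => by ring
  have hstep4a : ∑ y, ∑ z, i1 y z * (vt y - vt z)
      = ∑ y, ∑ z, ((1 / Ct y z) * I0 y z) * i1 y z := by
    refine Stmt11Aux.sum2_congr _ _ fun y z => ?_
    by_cases h : G.Adj y z
    · rw [hI0adj y z h]
      have hC := (hpost y z h).ne'
      field_simp
    · rw [hi1off y z h, hI0nadj y z h]; ring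
  have hstep4b : ∑ y, ∑ z, i1 y z * (vt1 y - vt1 z)
      = ∑ y, ∑ z, ((1 / Ct1 y z) * I1 y z) * i1 y z := by
    refine Stmt11Aux.sum2_congr _ _ fun y z => ?_
    by_cases h : G.Adj y z
    · rw [hI1adj y z h]
      have hC := (hpost1 y z h).ne'
      field_simp
    · rw [hi1off y z h, hI1nadj y z h]; ring
  have hFOCd : ∑ y, ∑ z, (1 / Ct1 y z) * i1 y z * (I1 y z - I0 y z) = 0 := by
    refine FOC _ (fun y z => by rw [hI1anti y z, hI0anti y z]; ring)
      (fun y z h => by rw [hI1nadj y z h, hI0nadj y z h]; ring) ?_ ?_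
    · rw [Finset.sum_sub_distrib, hdivI1 x hxa hxB, hdivI0 x hxa hxB]; ring
    · intro v hvx hvs
      have hva : v ≠ a := fun h => hvs (hmema v h)
      have hvB : v ∉ B := fun h => hvs (hmemB v h)
      rw [Finset.sum_sub_distrib, hdivI1 v hva hvB, hdivI0 v hva hvB]; ring
  have hswap : ∑ y, ∑ z, ((1 / Ct1 y z) * I1 y z) * i1 y z
      = ∑ y, ∑ z, ((1 / Ct1 y z) * I0 y z) * i1 y z := by
    have h1 : ∑ y, ∑ z, (((1 / Ct1 y z) * I1 y z) * i1 y z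
        - ((1 / Ct1 y z) * I0 y z) * i1 y z) = 0 := by
      rw [← hFOCd]
      exact Stmt11Aux.sum2_congr _ _ fun y z => by ring
    rw [Stmt11Aux.sum2_sub] at h1
    linarith
  have hiden : vt x - vt1 x
      = (1/2) * ∑ y, ∑ z, ((1 / Ct y z - 1 / Ct1 y z) * I0 y z) * i1 y z := by
    have hQ : ∑ y, ∑ z, ((1 / Ct y z - 1 / Ct1 y z) * I0 y z) * i1 y z
        = (∑ y, ∑ z, ((1 / Ct y z) * I0 y z) * i1 y z)
          - ∑ y, ∑ z, ((1 / Ct1 y z) * I0 y z) * i1 y z := by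
      rw [← Stmt11Aux.sum2_sub]
      exact Stmt11Aux.sum2_congr _ _ fun y z => by ring
    rw [hQ, ← hswap, ← hstep4a, ← hstep4b, ← hstep3, hstep2, hstep1]
    ring
  -- the bound
  have habs : |vt x - vt1 x| ≤ (1/2) * ∑ y, ∑ z,
      ((if G.Adj y z then |1 / Ct y z - 1 / Ct1 y z| else 0) * s0) := by
    rw [hiden, abs_mul, abs_of_nonneg (by norm_num : (0:ℝ) ≤ 1/2)]
    have h1 : |∑ y, ∑ z, ((1 / Ct y z - 1 / Ct1 y z) * I0 y z) * i1 y z|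
        ≤ ∑ y, ∑ z, |((1 / Ct y z - 1 / Ct1 y z) * I0 y z) * i1 y z| := by
      calc |∑ y, ∑ z, ((1 / Ct y z - 1 / Ct1 y z) * I0 y z) * i1 y z|
          ≤ ∑ y, |∑ z, ((1 / Ct y z - 1 / Ct1 y z) * I0 y z) * i1 y z| :=
            Finset.abs_sum_le_sum_abs _ _
        _ ≤ ∑ y, ∑ z, |((1 / Ct y z - 1 / Ct1 y z) * I0 y z) * i1 y z| :=
            Finset.sum_le_sum fun y _ => Finset.abs_sum_le_sum_abs _ _
    have h2 : ∀ y z, |((1 / Ct y z - 1 / Ct1 y z) * I0 y z) * i1 y z|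
        ≤ (if G.Adj y z then |1 / Ct y z - 1 / Ct1 y z| else 0) * s0 := by
      intro y z
      by_cases h : G.Adj y z
      · rw [if_pos h, abs_mul, abs_mul]
        have hb1 := hI0abs y z
        have hb2 := hi1abs y z
        have hd := abs_nonneg (1 / Ct y z - 1 / Ct1 y z)
        have hi0n := abs_nonneg (I0 y z)
        have m1 : |1 / Ct y z - 1 / Ct1 y z| * |I0 y z| ≤ |1 / Ct y z - 1 / Ct1 y z| * s0 :=
          mul_le_mul_of_nonneg_left hb1 hd
        have m2 : |1 / Ct y z - 1 / Ct1 y z| * |I0 y z| * |i1 y z|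
            ≤ |1 / Ct y z - 1 / Ct1 y z| * |I0 y z| * 1 :=
          mul_le_mul_of_nonneg_left hb2 (mul_nonneg hd hi0n)
        linarith
      · rw [if_neg h, hI0nadj y z h]
        simp
    have h3 : ∑ y, ∑ z, |((1 / Ct y z - 1 / Ct1 y z) * I0 y z) * i1 y z|
        ≤ ∑ y, ∑ z, ((if G.Adj y z then |1 / Ct y z - 1 / Ct1 y z| else 0) * s0) :=
      Finset.sum_le_sum fun y _ => Finset.sum_le_sum fun z _ => h2 y z
    have h4 := le_trans h1 h3
    linarith
  -- the effective resistance
  have hEform : energyF (fun y z => 1 / Ct y z) i0 = 1 / s0 := by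
    set u0 : V → V → ℝ := fun y z => I0 y z / s0 with hu0def
    clear_value u0
    have hu0flow : IsUnitFlowF G a B u0 := by
      refine ⟨fun y z => by simp only [hu0def]; rw [hI0anti y z]; ring,
        fun y z h => by simp only [hu0def]; rw [hI0nadj y z h]; ring, ?_, ?_⟩
      · intro v hva hvB
        simp only [hu0def]
        rw [← Finset.sum_div, hdivI0 v hva hvB]
        simp
      · simp only [hu0def]
        rw [← Finset.sum_div, ← hs0def, div_self hs0ne]
    have hEu0 : energyF (fun y z => 1 / Ct y z) u0 = 1 / s0 := by
      have h1 : ∑ y, ∑ z, (u0 y z)^2 * (1 / Ct y z)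
          = ∑ y, ∑ z, (I0 y z * (vt y - vt z)) * (1/s0^2) := by
        refine Stmt11Aux.sum2_congr _ _ fun y z => ?_
        simp only [hu0def]
        by_cases h : G.Adj y z
        · rw [hI0adj y z h]
          have hC := (hpost y z h).ne'
          field_simp
        · rw [hI0nadj y z h]; simp
      have h2 : energyF (fun y z => 1 / Ct y z) u0
          = (1/2) * ∑ y, ∑ z, (u0 y z)^2 * (1 / Ct y z) := rfl
      rw [h2, h1, Stmt11Aux.sum2_mul_right, hsbpI0, hdivsum]
      field_simp
    have hle1 := hi0min u0 hu0flow
    rw [hEu0] at hle1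
    set d0 : V → V → ℝ := fun y z => i0 y z - u0 y z with hd0def
    clear_value d0
    have hd0anti : ∀ y z, d0 y z = - d0 z y := fun y z => by
      simp only [hd0def, hu0def]; rw [hi0anti y z, hI0anti y z]; ring
    have hd0off : ∀ y z, ¬ G.Adj y z → d0 y z = 0 := fun y z h => by
      simp only [hd0def, hu0def]; rw [hi0off y z h, hI0nadj y z h]; simp
    have hcross : ∑ y, ∑ z, (1 / Ct y z) * u0 y z * d0 y z = 0 := by
      have hc1 : ∑ y, ∑ z, (1 / Ct y z) * u0 y z * d0 y z
          = ∑ y, ∑ z, (d0 y z * (vt y - vt z)) * (1/s0) := by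
        refine Stmt11Aux.sum2_congr _ _ fun y z => ?_
        by_cases h : G.Adj y z
        · simp only [hu0def]
          rw [hI0adj y z h]
          have hC := (hpost y z h).ne'
          field_simp
        · rw [hd0off y z h]; ring
      rw [hc1, Stmt11Aux.sum2_mul_right]
      have hsbpd : ∑ y, ∑ z, d0 y z * (vt y - vt z) = 2 * ∑ y, vt y * ∑ z, d0 y z :=
        Stmt11Aux.sbp d0 hd0anti vt
      have hdivd0 : ∑ y, vt y * ∑ z, d0 y z = 0 := by
        refine Finset.sum_eq_zero fun y _ => ?_
        by_cases hya : y = a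
        · have h5 : ∑ z, d0 y z = 0 := by
            simp only [hd0def]
            rw [hya, Finset.sum_sub_distrib, hi0src]
            simp only [hu0def]
            rw [← Finset.sum_div, ← hs0def, div_self hs0ne]
            ring
          rw [h5]; ring
        · by_cases hyB : y ∈ B
          · rw [hvtB y hyB]; ring
          · have h5 : ∑ z, d0 y z = 0 := by
              simp only [hd0def]
              rw [Finset.sum_sub_distrib, hi0int y hya hyB]
              simp only [hu0def]
              rw [← Finset.sum_div, hdivI0 y hya hyB]
              ring
            rw [h5]; ring
      rw [hsbpd, hdivd0]; ring
    have hquad : 0 ≤ (1/2) * ∑ y, ∑ z, (d0 y z)^2 * (1 / Ct y z) := by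
      have h2 : 0 ≤ ∑ y, ∑ z, (d0 y z)^2 * (1 / Ct y z) := by
        refine Finset.sum_nonneg fun y _ => Finset.sum_nonneg fun z _ => ?_
        by_cases h : G.Adj y z
        · have h1 := hpost y z h; positivity
        · rw [hd0off y z h]; simp
      linarith
    have hexp : (1/2) * ∑ y, ∑ z, (u0 y z + 1 * d0 y z)^2 * (1 / Ct y z)
        = (1/2) * (∑ y, ∑ z, (u0 y z)^2 * (1 / Ct y z))
          + 1 * (∑ y, ∑ z, (1 / Ct y z) * u0 y z * d0 y z)
          + 1^2 * ((1/2) * ∑ y, ∑ z, (d0 y z)^2 * (1 / Ct y z)) :=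
      Stmt11Aux.energy_expand (fun y z => 1 / Ct y z) u0 d0 1
    have hfix : ∑ y, ∑ z, (u0 y z + 1 * d0 y z)^2 * (1 / Ct y z)
        = ∑ y, ∑ z, (i0 y z)^2 * (1 / Ct y z) :=
      Stmt11Aux.sum2_congr _ _ fun y z => by rw [hd0def]; ring
    have hEi0 : energyF (fun y z => 1 / Ct y z) i0
        = (1/2) * ∑ y, ∑ z, (i0 y z)^2 * (1 / Ct y z) := rfl
    have hEu0' : energyF (fun y z => 1 / Ct y z) u0
        = (1/2) * ∑ y, ∑ z, (u0 y z)^2 * (1 / Ct y z) := rfl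
    have hge1 : 1 / s0 ≤ energyF (fun y z => 1 / Ct y z) i0 := by
      rw [hEi0, ← hfix, hexp, hcross, ← hEu0', hEu0]
      linarith
    linarith
  -- conclusion
  rw [hEform, one_div_one_div]
  have hrearr : (1/2) * ∑ y, ∑ z, ((if G.Adj y z then |1 / Ct y z - 1 / Ct1 y z| else 0) * s0)
      = s0 * ((1/2) * ∑ y, ∑ z, (if G.Adj y z then |1 / Ct y z - 1 / Ct1 y z| else 0)) := by
    rw [Stmt11Aux.sum2_mul_right]
    ring
  rw [← hrearr]
  exact habs

end
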